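/- arXiv:1104.5529 — 2 statements merged into one kernel-verified Lean document; each statement's English description precedes it below -/
import Mathlib

section
/- Let W(D_{n+1}) be the Weyl group of type D_{n+1} with simple reflections s_1,...,s_{n+1} acting on R^{n+1}, where s_i (for i ≥ 2) is the reflection in e_i - e_{i-1} and s_1 is the reflection in e_1 + e_2. Then the expression w_n = (s_{n+1} s_n ⋯ s_2 s_1)(s_3 s_4 ⋯ s_n s_{n+1}) is a reduced expression; i.e., the length of w_n equals 2n. -/
/-- Standard basis vectors of `ℝ^∞` (positions `1,…,n+1` are used for
the type `D_{n+1}` root system). -/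
noncomputable def De (a : ℕ) : ℕ → ℝ := fun t => if t = a then 1 else 0

/-- The simple roots of type `D_{n+1}`: `α_1 = e_1 + e_2` and
`α_j = e_j - e_{j-1}` for `2 ≤ j ≤ n+1`. -/
noncomputable def Dalpha (j : ℕ) : ℕ → ℝ :=
  if j = 1 then De 1 + De 2 else De j - De (j - 1)

/-- The simple reflection `s_j` of type `D_{n+1}`, the reflection in the
simple root `α_j` (with respect to the standard inner product on the span
of `e_1, …, e_{n+1}`), as an endomorphism of `ℕ → ℝ`. -/
noncomputable def Ds (n j : ℕ) : Function.End (ℕ → ℝ) := fun v =>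
  v - (∑ i ∈ Finset.range (n + 2), v i * Dalpha j i) • Dalpha j

/-- The word `(s_{n+1} s_n ⋯ s_2 s_1)(s_3 s_4 ⋯ s_n s_{n+1})` for the
element `w_n` of `W(D_{n+1})`. -/
def Dword (n : ℕ) : List ℕ :=
  ((List.range (n + 1)).map (· + 1)).reverse ++ (List.range (n - 1)).map (· + 3)


/-!
Only the image of `e_{n+1}` matters. The simple reflections permute the signed basis vectors
`±e_k`, and `w_n` sends `e_{n+1}` to `-e_{n+1}`. Along the way, each letter `s_j` moves the
signed index of the current vector along an edge `k — k-1`, `-k — -(k-1)`, `1 — -2` or `2 — -1`.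
The potential `z ↦ z` for `z > 0`, `z ↦ z + 2` for `z < 0` changes by at most one along an edge
and drops by `2n` from `n+1` to `-(n+1)`, so every word for `w_n` has at least `2n` letters.
-/

theorem Function.Semiconj.list_prod_map {ι α β : Type*} {f : α → β} {g : ι → Function.End α}
    {h : ι → Function.End β} {l : List ι} (hl : ∀ i ∈ l, Function.Semiconj f (g i) (h i)) :
    Function.Semiconj f (l.map g).prod (l.map h).prod := by
  induction l with
  | nil => exact Function.Semiconj.id_right
  | cons i l ih =>
    simp only [List.map_cons, List.prod_cons]
    exact (hl i List.mem_cons_self).comp_right (ih fun k hk => hl k (List.mem_cons_of_mem i hk))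

theorem abs_sub_le_length_of_abs_sub_le_one {ι α : Type*} (p : α → ℤ) {g : ι → Function.End α}
    (hg : ∀ i a, |p (g i a) - p a| ≤ 1) (l : List ι) (a : α) :
    |p ((l.map g).prod a) - p a| ≤ l.length := by
  induction l with
  | nil => show |p a - p a| ≤ 0; simp
  | cons i l ih =>
    calc |p (g i ((l.map g).prod a)) - p a|
        ≤ |p (g i ((l.map g).prod a)) - p ((l.map g).prod a)| + |p ((l.map g).prod a) - p a| :=
          abs_sub_le _ _ _
      _ ≤ 1 + l.length := add_le_add (hg _ _) ih
      _ = (i :: l).length := by simp [add_comm]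

/-- `sign z • e_|z|` for `z ≠ 0`; `Dsigned 0 = e_0`, which every `Ds n j` fixes. -/
noncomputable def Dsigned (z : ℤ) : ℕ → ℝ := fun t =>
  if (t : ℤ) = z then 1 else if (t : ℤ) = -z then -1 else 0

def DsIndex (j : ℕ) : Function.End ℤ := fun z =>
  if j = 1 then
    if z = 1 then -2 else if z = -1 then 2 else if z = 2 then -1 else if z = -2 then 1 else z
  else
    if z = j then j - 1 else if z = -j then 1 - j
    else if z = j - 1 then j else if z = 1 - j then -j else z

theorem Dsigned_injective : Function.Injective Dsigned := by
  intro z z' h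
  have h₁ := congrFun h z.natAbs
  have h₂ := congrFun h z'.natAbs
  simp only [Dsigned] at h₁ h₂
  split_ifs at h₁ h₂ <;> first | omega | norm_num at h₁

theorem Ds_apply_of_two_le {n j : ℕ} (hj : 2 ≤ j) (hjn : j ≤ n + 1) (v : ℕ → ℝ) (t : ℕ) :
    Ds n j v t = v (Equiv.swap (j - 1) j t) := by
  have hj1 : j ≠ 1 := by omega
  simp only [Ds, Dalpha, hj1, ↓reduceIte, Pi.sub_apply, Pi.smul_apply, smul_eq_mul, De, mul_sub,
    mul_ite, mul_one, mul_zero, Finset.sum_sub_distrib, Finset.sum_ite_eq', Finset.mem_range,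
    Equiv.swap_apply_def]
  split_ifs <;> first | (exfalso; omega) | (subst_vars; ring)

theorem Ds_one_apply {n : ℕ} (hn : 1 ≤ n) (v : ℕ → ℝ) (t : ℕ) :
    Ds n 1 v t = if t = 1 then -v 2 else if t = 2 then -v 1 else v t := by
  simp only [Ds, Dalpha, ↓reduceIte, Pi.add_apply, Pi.sub_apply, Pi.smul_apply, smul_eq_mul, De,
    mul_add, mul_ite, mul_one, mul_zero, Finset.sum_add_distrib, Finset.sum_ite_eq',
    Finset.mem_range]
  split_ifs <;> first | (exfalso; omega) | (subst_vars; ring)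

theorem Ds_Dsigned {n j : ℕ} (hn : 1 ≤ n) (hj : 1 ≤ j) (hjn : j ≤ n + 1) (z : ℤ) :
    Ds n j (Dsigned z) = Dsigned (DsIndex j z) := by
  funext t
  rcases eq_or_ne j 1 with rfl | hj1
  · rw [Ds_one_apply hn]
    simp only [Dsigned, DsIndex, if_true]
    split_ifs <;> first | rfl | (exfalso; omega) | norm_num
  · rw [Ds_apply_of_two_le (by omega) hjn]
    have key : ((Equiv.swap (j - 1) j t : ℕ) = z ↔ (t : ℤ) = DsIndex j z) ∧
        ((Equiv.swap (j - 1) j t : ℕ) = -z ↔ (t : ℤ) = -DsIndex j z) := by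
      rw [Equiv.swap_apply_def, DsIndex, if_neg hj1]
      split_ifs <;> omega
    simp only [Dsigned, key.1, key.2]

theorem Ds_prod_Dsigned {n : ℕ} (hn : 1 ≤ n) {l : List ℕ} (hl : ∀ j ∈ l, 1 ≤ j ∧ j ≤ n + 1)
    (z : ℤ) : (l.map (Ds n)).prod (Dsigned z) = Dsigned ((l.map DsIndex).prod z) :=
  ((Function.Semiconj.list_prod_map fun j hj z =>
    (Ds_Dsigned hn (hl j hj).1 (hl j hj).2 z).symm) z).symm

def Dpotential (z : ℤ) : ℤ := if z < 0 then z + 2 else z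

theorem abs_Dpotential_DsIndex_sub_le (j : ℕ) (z : ℤ) :
    |Dpotential (DsIndex j z) - Dpotential z| ≤ 1 := by
  unfold Dpotential DsIndex
  split_ifs <;> rw [abs_le] <;> omega

theorem DsIndex_prod_ascending (m : ℕ) :
    (((List.range m).map (· + 3)).map DsIndex).prod (m + 2) = 2 := by
  induction m with
  | zero => rfl
  | succ m ih =>
    simp only [List.range_succ, List.map_append, List.prod_append, List.map_cons, List.map_nil,
      List.prod_cons, List.prod_nil, mul_one]
    show (((List.range m).map (· + 3)).map DsIndex).prod (DsIndex (m + 3) _) = 2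
    rw [show DsIndex (m + 3) ((m + 1 : ℕ) + 2) = m + 2 by unfold DsIndex; split_ifs <;> omega, ih]

theorem DsIndex_prod_descending (k : ℕ) :
    ((((List.range (k + 1)).map (· + 1)).reverse).map DsIndex).prod 2 = -(k + 1) := by
  induction k with
  | zero => rfl
  | succ k ih =>
    rw [List.range_succ, List.map_append, List.reverse_append]
    simp only [List.map_cons, List.map_nil, List.reverse_cons, List.reverse_nil, List.nil_append,
      List.singleton_append, List.prod_cons]
    show DsIndex (k + 1 + 1) _ = _
    rw [ih]
    unfold DsIndex
    split_ifs <;> omega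

theorem Dword_length {n : ℕ} (hn : 1 ≤ n) : (Dword n).length = 2 * n := by
  simp only [Dword, List.length_append, List.length_reverse, List.length_map, List.length_range]
  omega

theorem bounds_of_mem_Dword {n j : ℕ} (hj : j ∈ Dword n) : 1 ≤ j ∧ j ≤ n + 1 := by
  simp only [Dword, List.mem_append, List.mem_reverse, List.mem_map, List.mem_range] at hj
  rcases hj with ⟨a, ha, rfl⟩ | ⟨a, ha, rfl⟩ <;> omega

theorem DsIndex_prod_Dword {n : ℕ} (hn : 1 ≤ n) :
    ((Dword n).map DsIndex).prod (n + 1) = -(n + 1) := by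
  have hn' : (n : ℤ) + 1 = ((n - 1 : ℕ) : ℤ) + 2 := by omega
  rw [Dword, List.map_append, List.prod_append, Function.End.mul_def, hn']
  dsimp only [Function.comp]
  rw [DsIndex_prod_ascending, DsIndex_prod_descending]
  omega

/-- The expression `w_n = (s_{n+1} s_n ⋯ s_2 s_1)(s_3 s_4 ⋯ s_n s_{n+1})` in
the Weyl group of type `D_{n+1}` is reduced: the word has length `2n` and no
product of fewer than `2n` simple reflections equals `w_n`. -/
theorem Dword_reduced (n : ℕ) (hn : 3 ≤ n) :
    (Dword n).length = 2 * n ∧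
    ∀ l : List ℕ, (∀ j ∈ l, 1 ≤ j ∧ j ≤ n + 1) →
      (l.map (Ds n)).prod = ((Dword n).map (Ds n)).prod →
      2 * n ≤ l.length := by
  have hn1 : 1 ≤ n := by omega
  refine ⟨Dword_length hn1, fun l hl hprod => ?_⟩
  have himage : (l.map DsIndex).prod (n + 1) = -(n + 1) := by
    apply Dsigned_injective
    rw [← Ds_prod_Dsigned hn1 hl, hprod, Ds_prod_Dsigned hn1 fun _ => bounds_of_mem_Dword,
      DsIndex_prod_Dword hn1]
  have hbound := abs_sub_le_length_of_abs_sub_le_one Dpotential abs_Dpotential_DsIndex_sub_le l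
    (n + 1 : ℤ)
  rw [himage, show Dpotential (-(n + 1)) - Dpotential (n + 1) = -(2 * n : ℤ) by
    unfold Dpotential; split_ifs <;> omega] at hbound
  rw [abs_neg, abs_of_nonneg (by positivity)] at hbound
  exact_mod_cast hbound
end

section
/- Let W(Â_m) be the affine Weyl group of type Â_m with generators s_0, s_1, ..., s_m acting on Q(A_m) ⊕ Z, where α_0 = e_m - e_1 + 1 and α_i = e_i - e_{i+1}. The element ĉ_m = (s_1 ⋯ s_m)(s_0 s_1 ⋯ s_{m-1}) has length 2m; i.e., the given expression is reduced. -/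
/-!
For `w ∈ W(Â_m)` and a token `1 ≤ i ≤ m + 1`, `w e_i = e_p + b δ`; call `(p, b)` the place of
`i` under `w`. Each `s_j` moves places by a transposition of positions, shifting the winding `b`
only when `s_0` crosses between positions `1` and `m`. Places form a tree: a spine `ℤ` on which
`(p, b)` with `p ≤ m` sits at height `p - m b`, and a leaf `(m + 1, b)` hanging off `(m, b)`.
A letter moves at most two tokens, each along one edge of this tree, so the total tree distance
of the tokens to their places under `ĉ_m` drops by at most `2` per letter. That total is `4m`
at the identity and `0` at `ĉ_m`.
-/

/-- Standard basis vectors (position `0` is the affine `ℤ`-coordinate,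
positions `1,…,m+1` carry the type `A_m` root system). -/
noncomputable def Ae (a : ℕ) : ℕ → ℝ := fun t => if t = a then 1 else 0

/-- The simple roots of type `Â_m`: `α_0 = e_m - e_1 + δ` (where `δ = Ae 0`
is the isotropic affine generator) and `α_j = e_j - e_{j+1}` for
`1 ≤ j ≤ m`. -/
noncomputable def Aalpha (m j : ℕ) : ℕ → ℝ :=
  if j = 0 then Ae m - Ae 1 + Ae 0 else Ae j - Ae (j + 1)

/-- The affine simple reflection `s_j`, the reflection in `α_j` with respect
to the bilinear form extending the standard inner product on the span of
`e_1,…,e_{m+1}` with `δ` isotropic and orthogonal to it. -/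
noncomputable def As (m j : ℕ) : Function.End (ℕ → ℝ) := fun v =>
  v - (∑ i ∈ Finset.Icc 1 (m + 1), v i * Aalpha m j i) • Aalpha m j

/-- The word `(s_1 ⋯ s_m)(s_0 s_1 ⋯ s_{m-1})` for `ĉ_m ∈ W(Â_m)`. -/
def Aword (m : ℕ) : List ℕ :=
  (List.range m).map (· + 1) ++ List.range m

namespace AffineA

def swapPair (m j : ℕ) : ℕ × ℕ := if j = 0 then (1, m) else (j, j + 1)

def transp (m j : ℕ) : Equiv.Perm ℕ := Equiv.swap (swapPair m j).1 (swapPair m j).2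

def wind (m j p : ℕ) : ℤ := if j = 0 then (if p = 1 then 1 else if p = m then -1 else 0) else 0

def move (m j : ℕ) (x : ℕ × ℤ) : ℕ × ℤ := (transp m j x.1, x.2 + wind m j x.1)

def place (m : ℕ) (l : List ℕ) (i : ℕ) : ℕ × ℤ := l.foldr (move m) (i, 0)

lemma place_cons (m j : ℕ) (l : List ℕ) (i : ℕ) :
    place m (j :: l) i = move m j (place m l i) := rfl

lemma place_fst (m : ℕ) (l : List ℕ) (i : ℕ) :
    (place m l i).1 = (l.map (transp m)).prod i := by
  induction l with
  | nil => rfl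
  | cons j l ih => simp [place_cons, move, ih, Equiv.Perm.mul_apply]

noncomputable def vec (x : ℕ × ℤ) : ℕ → ℝ := Ae x.1 + (x.2 : ℝ) • Ae 0

lemma Ae_apply (a t : ℕ) : Ae a t = if t = a then 1 else 0 := rfl

lemma vec_injective : Function.Injective vec := by
  rintro ⟨p, b⟩ ⟨q, c⟩ h
  have h0 := congrFun h 0
  have hp := congrFun h p
  have hq := congrFun h q
  simp only [vec, Ae_apply, Pi.add_apply, Pi.smul_apply, smul_eq_mul] at h0 hp hq
  obtain rfl : p = q := by
    by_contra hpq
    rcases eq_or_ne p 0 with rfl | hp0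
    · simp [Ne.symm hpq] at hq
    · simp [hpq, hp0] at hp
  simp only [Prod.mk.injEq, true_and]
  simpa using add_left_cancel h0

lemma sum_Ae_mul (s : Finset ℕ) (p : ℕ) (f : ℕ → ℝ) :
    ∑ i ∈ s, Ae p i * f i = if p ∈ s then f p else 0 := by
  simp [Ae_apply, ite_mul, Finset.sum_ite_eq']

lemma As_apply (m j : ℕ) (v : ℕ → ℝ) :
    As m j v = v - (∑ i ∈ Finset.Icc 1 (m + 1), v i * Aalpha m j i) • Aalpha m j := rfl

lemma As_vec (m j : ℕ) (hm : 1 < m) (hj : j ≤ m) (x : ℕ × ℤ) :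
    As m j (vec x) = vec (move m j x) := by
  obtain ⟨p, b⟩ := x
  have hc : ∑ i ∈ Finset.Icc 1 (m + 1), vec (p, b) i * Aalpha m j i =
      if p ∈ Finset.Icc 1 (m + 1) then Aalpha m j p else 0 := by
    simp only [vec, Pi.add_apply, Pi.smul_apply, smul_eq_mul, add_mul, Finset.sum_add_distrib,
      mul_assoc, ← Finset.mul_sum, sum_Ae_mul]
    simp
  rw [As_apply, hc]
  funext t
  simp only [vec, move, Pi.sub_apply, Pi.add_apply, Pi.smul_apply, smul_eq_mul, Ae_apply,
    Finset.mem_Icc]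
  rcases eq_or_ne j 0 with rfl | hj0
  · rcases eq_or_ne p 1 with rfl | hp1
    · simp [Aalpha, transp, swapPair, wind, Ae_apply]
      split_ifs <;> first | omega | ring
    rcases eq_or_ne p m with rfl | hpm
    · simp [Aalpha, transp, swapPair, wind, Ae_apply, hp1]
      split_ifs <;> first | omega | ring
    · simp [Aalpha, transp, swapPair, wind, Ae_apply, Equiv.swap_apply_of_ne_of_ne hp1 hpm, hp1,
        hpm]
      intros; omega
  · rcases eq_or_ne p j with rfl | hpj
    · simp [Aalpha, transp, swapPair, wind, Ae_apply, hj0]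
      split_ifs <;> first | omega | ring
    rcases eq_or_ne p (j + 1) with rfl | hpj'
    · simp [Aalpha, transp, swapPair, wind, Ae_apply, hj0]
      split_ifs <;> first | omega | ring
    · simp [Aalpha, transp, swapPair, wind, Ae_apply, Equiv.swap_apply_of_ne_of_ne hpj hpj', hj0,
        hpj, hpj']

lemma prod_map_As_Ae (m : ℕ) (hm : 1 < m) (l : List ℕ) (hl : ∀ j ∈ l, j ≤ m) (i : ℕ) :
    (l.map (As m)).prod (Ae i) = vec (place m l i) := by
  induction l with
  | nil => simp [place, vec, Function.End.one_def]
  | cons j l ih =>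
    change As m j ((l.map (As m)).prod (Ae i)) = vec (move m j (place m l i))
    rw [ih fun k hk => hl k (List.mem_cons_of_mem j hk), As_vec m j hm (hl j List.mem_cons_self)]

lemma move_eq_self (m j : ℕ) (x : ℕ × ℤ) (h1 : x.1 ≠ (swapPair m j).1)
    (h2 : x.1 ≠ (swapPair m j).2) : move m j x = x := by
  have hw : wind m j x.1 = 0 := by
    unfold wind swapPair at *
    split_ifs at * <;> simp_all
  simp [move, transp, Equiv.swap_apply_of_ne_of_ne h1 h2, hw]

lemma card_moved_le_two (m j : ℕ) (l : List ℕ) (s : Finset ℕ) :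
    (s.filter fun i => move m j (place m l i) ≠ place m l i).card ≤ 2 := by
  calc (s.filter fun i => move m j (place m l i) ≠ place m l i).card
      ≤ ({(swapPair m j).1, (swapPair m j).2} : Finset ℕ).card := by
        refine Finset.card_le_card_of_injOn (fun i => (place m l i).1) ?_ ?_
        · intro i hi
          have hmoved := (Finset.mem_filter.mp hi).2
          by_contra hout
          simp only [Finset.coe_insert, Finset.coe_singleton, Set.mem_insert_iff,
            Set.mem_singleton_iff, not_or] at hout
          exact hmoved (move_eq_self m j _ hout.1 hout.2)
        · intro i _ k _ hik
          simp only [place_fst] at hik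
          exact (Equiv.injective _) hik
    _ ≤ 2 := Finset.card_le_two

def height (m : ℕ) (x : ℕ × ℤ) : ℤ := (min x.1 m : ℕ) - m * x.2

def pendant (m : ℕ) (x : ℕ × ℤ) : ℤ := if x.1 = m + 1 then 1 else 0

def placeDist (m : ℕ) (x y : ℕ × ℤ) : ℤ :=
  if x = y then 0 else |height m x - height m y| + pendant m x + pendant m y

lemma placeDist_self (m : ℕ) (x : ℕ × ℤ) : placeDist m x x = 0 := if_pos rfl

lemma pendant_nonneg (m : ℕ) (x : ℕ × ℤ) : 0 ≤ pendant m x := by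
  unfold pendant; split_ifs <;> norm_num

lemma placeDist_triangle (m : ℕ) (x y z : ℕ × ℤ) :
    placeDist m x z ≤ placeDist m x y + placeDist m y z := by
  have := abs_sub_le (height m x) (height m y) (height m z)
  have := abs_nonneg (height m x - height m y)
  have := abs_nonneg (height m y - height m z)
  have := pendant_nonneg m x
  have := pendant_nonneg m y
  have := pendant_nonneg m z
  unfold placeDist
  split_ifs <;> subst_vars <;> simp_all <;> linarith

lemma placeDist_move_le (m j : ℕ) (x : ℕ × ℤ) : placeDist m x (move m j x) ≤ 1 := by
  obtain ⟨p, b⟩ := x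
  rcases eq_or_ne (move m j (p, b)) (p, b) with h | h
  · simp [placeDist, h]
  rw [placeDist, if_neg (Ne.symm h)]
  simp only [move, transp, swapPair, wind, height, pendant, Equiv.swap_apply_def] at h ⊢
  split_ifs at h ⊢ <;> simp_all
  all_goals first
    | omega
    | (rw [abs_le]; constructor <;> (try ring_nf) <;> omega)

lemma placeDist_le_move_add (m j : ℕ) (x t : ℕ × ℤ) :
    placeDist m x t ≤ placeDist m (move m j x) t + if move m j x = x then 0 else 1 := by
  split_ifs with h
  · rw [h, add_zero]
  · linarith [placeDist_triangle m x (move m j x) t, placeDist_move_le m j x]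

lemma sum_placeDist_le_cons (m j : ℕ) (l : List ℕ) (s : Finset ℕ) (t : ℕ → ℕ × ℤ) :
    ∑ i ∈ s, placeDist m (place m l i) (t i) ≤
      ∑ i ∈ s, placeDist m (place m (j :: l) i) (t i) + 2 := by
  calc ∑ i ∈ s, placeDist m (place m l i) (t i)
      ≤ ∑ i ∈ s, (placeDist m (place m (j :: l) i) (t i) +
          if move m j (place m l i) = place m l i then 0 else 1) :=
        Finset.sum_le_sum fun i _ => placeDist_le_move_add m j _ _
    _ = ∑ i ∈ s, placeDist m (place m (j :: l) i) (t i) +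
          (s.filter fun i => move m j (place m l i) ≠ place m l i).card := by
        rw [Finset.sum_add_distrib, Finset.sum_ite, Finset.sum_const_zero, zero_add,
          Finset.sum_const, nsmul_one]
    _ ≤ _ := by
        have := card_moved_le_two m j l s
        omega

lemma sum_placeDist_le (m : ℕ) (l : List ℕ) (s : Finset ℕ) (t : ℕ → ℕ × ℤ) :
    ∑ i ∈ s, placeDist m (i, 0) (t i) ≤
      ∑ i ∈ s, placeDist m (place m l i) (t i) + 2 * l.length := by
  induction l with
  | nil => simp [place]
  | cons j l ih =>
    have := sum_placeDist_le_cons m j l s t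
    push_cast [List.length_cons]
    linarith

lemma Aword_le (m : ℕ) : ∀ j ∈ Aword m, j ≤ m := by
  simp only [Aword, List.mem_append, List.mem_map, List.mem_range]
  omega

lemma Aword_succ (n : ℕ) : Aword (n + 1) = List.range' 1 (n + 1) ++ 0 :: List.range' 1 n := by
  have hshift : ∀ k, (List.range k).map (· + 1) = List.range' 1 k := fun k => by
    rw [List.range'_eq_map_range]
    exact List.map_congr_left fun a _ => Nat.add_comm a 1
  rw [Aword, hshift, List.range_eq_range', List.range'_succ (s := 0)]

lemma foldr_range'_move (m a n : ℕ) (ha : 1 ≤ a) (x : ℕ × ℤ) :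
    (List.range' a n).foldr (move m) x =
      (if a ≤ x.1 ∧ x.1 < a + n then x.1 + 1 else if x.1 = a + n then a else x.1, x.2) := by
  induction n generalizing a with
  | zero =>
    refine Prod.ext ?_ rfl
    simp only [List.range'_zero, List.foldr_nil]
    split_ifs <;> omega
  | succ n ih =>
    rw [List.range'_succ, List.foldr_cons, ih (a + 1) (by omega)]
    have ha0 : a ≠ 0 := by omega
    simp only [move, transp, swapPair, wind, if_neg ha0, add_zero, Equiv.swap_apply_def]
    congr 1
    split_ifs <;> omega

lemma place_Aword (n i : ℕ) : place (n + 2) (Aword (n + 2)) i =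
    if 1 ≤ i ∧ i ≤ n then (i + 2, 0) else if i = n + 1 then (2, -1)
    else if i = n + 2 then (n + 3, 1) else if i = n + 3 then (1, 0) else (i, 0) := by
  rw [place, Aword_succ, List.foldr_append, List.foldr_cons, foldr_range'_move _ _ _ le_rfl,
    foldr_range'_move _ _ _ le_rfl]
  simp only [move, transp, swapPair, wind, if_true, Equiv.swap_apply_def]
  split_ifs <;> simp only [Prod.mk.injEq, true_and, zero_add] <;> omega

lemma sum_placeDist_place_Aword (n : ℕ) :
    ∑ i ∈ Finset.Icc 1 (n + 3), placeDist (n + 2) (i, 0) (place (n + 2) (Aword (n + 2)) i) =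
      4 * (n + 2) := by
  have hlow : ∀ i ∈ Finset.Icc 1 n,
      placeDist (n + 2) (i, 0) (place (n + 2) (Aword (n + 2)) i) = 2 := by
    intro i hi
    rw [Finset.mem_Icc] at hi
    rw [place_Aword, if_pos hi]
    simp [placeDist, height, pendant, abs_eq_max_neg]
    omega
  rw [Finset.sum_Icc_succ_top (by omega), Finset.sum_Icc_succ_top (by omega),
    Finset.sum_Icc_succ_top (by omega), Finset.sum_congr rfl hlow]
  simp [place_Aword, placeDist, height, pendant, abs_eq_max_neg]
  omega

end AffineA

open AffineA

/-- The element `ĉ_m = (s_1 ⋯ s_m)(s_0 s_1 ⋯ s_{m-1})` of the affine Weyl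
group `W(Â_m)` has length `2m`; i.e., the given expression is reduced. -/
theorem Aword_reduced (m : ℕ) (hm : 1 < m) :
    (Aword m).length = 2 * m ∧
    ∀ l : List ℕ, (∀ j ∈ l, j ≤ m) →
      (l.map (As m)).prod = ((Aword m).map (As m)).prod →
      2 * m ≤ l.length := by
  refine ⟨by simp [Aword]; omega, fun l hl hprod => ?_⟩
  have hplace : place m l = place m (Aword m) := funext fun i => vec_injective <| by
    rw [← prod_map_As_Ae m hm l hl, ← prod_map_As_Ae m hm _ (Aword_le m), hprod]
  obtain ⟨n, rfl⟩ : ∃ n, m = n + 2 := ⟨m - 2, by omega⟩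
  have hbound := sum_placeDist_le (n + 2) l (Finset.Icc 1 (n + 3)) (place (n + 2) (Aword (n + 2)))
  simp only [hplace, placeDist_self, Finset.sum_const_zero, zero_add,
    sum_placeDist_place_Aword] at hbound
  omega
end
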